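/- Let Ω ⊆ ℝ^n be open, let u, φ be smooth on Ω with φ > 0, and −Δφ = λφ on Ω. Then for every nonnegative integer m, pointwise on Ω: |∇Δ^m u|² − λ^{2m+1} u² = |∇Δ^m u − (∇φ/φ) Δ^m u|² + Σ_{j=0}^{m−1} λ^{2(m−j)−1} ( |Δ^{j+1}u + λΔ^j u|² + 2λ |∇Δ^j u − (∇φ/φ)Δ^j u|² ) + 2 Σ_{j=0}^{m−1} λ^{2(m−j)} div( (∇φ/φ)(Δ^j u)² − (Δ^j u)∇Δ^j u ) + div( (∇φ/φ)(Δ^m u)² ). -/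

import Mathlib

open MeasureTheory Finset
open scoped RealInnerProductSpace

noncomputable def grad {n : ℕ} (f : EuclideanSpace ℝ (Fin n) → ℝ) :
    EuclideanSpace ℝ (Fin n) → EuclideanSpace ℝ (Fin n) :=
  fun x => gradient f x

noncomputable def dvg {n : ℕ} (V : EuclideanSpace ℝ (Fin n) → EuclideanSpace ℝ (Fin n)) :
    EuclideanSpace ℝ (Fin n) → ℝ :=
  fun x => ∑ i, fderiv ℝ V x (EuclideanSpace.single i 1) i

noncomputable def lap {n : ℕ} (f : EuclideanSpace ℝ (Fin n) → ℝ) :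
    EuclideanSpace ℝ (Fin n) → ℝ :=
  dvg (grad f)

variable {n : ℕ}

lemma inner_grad (f : EuclideanSpace ℝ (Fin n) → ℝ) (x h : EuclideanSpace ℝ (Fin n)) :
    ⟪grad f x, h⟫ = fderiv ℝ f x h := by
  simp [grad, gradient, InnerProductSpace.toDual_symm_apply]

lemma trace_smulRight (c' : EuclideanSpace ℝ (Fin n) →L[ℝ] ℝ) (v : EuclideanSpace ℝ (Fin n)) :
    ∑ i, (c'.smulRight v) (EuclideanSpace.single i 1) i = c' v := by
  have hv : v = ∑ i, v i • EuclideanSpace.single i (1:ℝ) := by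
    ext j
    rw [show ((∑ x : Fin n, v x • EuclideanSpace.single x (1:ℝ)) j) =
        ∑ x : Fin n, (v x • EuclideanSpace.single x (1:ℝ)) j from by rw [WithLp.ofLp_sum]; exact Finset.sum_apply j Finset.univ _]
    simp [EuclideanSpace.single_apply]
  conv_rhs => rw [hv]
  simp [map_sum, mul_comm]

lemma contDiffOn_grad {Ω : Set (EuclideanSpace ℝ (Fin n))} (hΩ : IsOpen Ω)
    {f : EuclideanSpace ℝ (Fin n) → ℝ} (hf : ContDiffOn ℝ (⊤ : ℕ∞) f Ω) :
    ContDiffOn ℝ (⊤ : ℕ∞) (grad f) Ω := by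
  have h1 : ContDiffOn ℝ (⊤ : ℕ∞) (fun x => fderiv ℝ f x) Ω := by
    have h2 := hf.fderivWithin hΩ.uniqueDiffOn (m := (⊤ : ℕ∞)) (by simp)
    exact h2.congr fun x hx => (fderivWithin_of_isOpen hΩ hx).symm
  exact ((InnerProductSpace.toDual ℝ (EuclideanSpace ℝ (Fin n))).symm.toContinuousLinearEquiv.contDiff).comp_contDiffOn h1

lemma contDiffOn_dvg {Ω : Set (EuclideanSpace ℝ (Fin n))} (hΩ : IsOpen Ω)
    {V : EuclideanSpace ℝ (Fin n) → EuclideanSpace ℝ (Fin n)} (hV : ContDiffOn ℝ (⊤ : ℕ∞) V Ω) :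
    ContDiffOn ℝ (⊤ : ℕ∞) (dvg V) Ω := by
  have h1 : ContDiffOn ℝ (⊤ : ℕ∞) (fun x => fderiv ℝ V x) Ω := by
    have h2 := hV.fderivWithin hΩ.uniqueDiffOn (m := (⊤ : ℕ∞)) (by simp)
    exact h2.congr fun x hx => (fderivWithin_of_isOpen hΩ hx).symm
  apply ContDiffOn.sum
  intro i _
  have h3 : ContDiffOn ℝ (⊤ : ℕ∞) (fun x => fderiv ℝ V x (EuclideanSpace.single i 1)) Ω := by
    have := ((ContinuousLinearMap.apply ℝ (EuclideanSpace ℝ (Fin n))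
      (EuclideanSpace.single i 1)).contDiff).comp_contDiffOn h1
    exact this
  have h4 := ((EuclideanSpace.proj (𝕜 := ℝ) i :
      EuclideanSpace ℝ (Fin n) →L[ℝ] ℝ).contDiff).comp_contDiffOn h3
  exact h4

lemma contDiffOn_lap {Ω : Set (EuclideanSpace ℝ (Fin n))} (hΩ : IsOpen Ω)
    {f : EuclideanSpace ℝ (Fin n) → ℝ} (hf : ContDiffOn ℝ (⊤ : ℕ∞) f Ω) :
    ContDiffOn ℝ (⊤ : ℕ∞) (lap f) Ω :=
  contDiffOn_dvg hΩ (contDiffOn_grad hΩ hf)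

lemma diffAt_of_contDiffOn {Ω : Set (EuclideanSpace ℝ (Fin n))} (hΩ : IsOpen Ω)
    {F : Type*} [NormedAddCommGroup F] [NormedSpace ℝ F]
    {f : EuclideanSpace ℝ (Fin n) → F} (hf : ContDiffOn ℝ (⊤ : ℕ∞) f Ω)
    {x : EuclideanSpace ℝ (Fin n)} (hx : x ∈ Ω) : DifferentiableAt ℝ f x :=
  ((hf.contDiffAt (hΩ.mem_nhds hx)).differentiableAt (by simp))

lemma dvg_sub {A B : EuclideanSpace ℝ (Fin n) → EuclideanSpace ℝ (Fin n)}
    {x : EuclideanSpace ℝ (Fin n)} (hA : DifferentiableAt ℝ A x) (hB : DifferentiableAt ℝ B x) :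
    dvg (fun y => A y - B y) x = dvg A x - dvg B x := by
  simp only [dvg, fderiv_fun_sub hA hB, ContinuousLinearMap.coe_sub', Pi.sub_apply, PiLp.sub_apply,
    Finset.sum_sub_distrib]

lemma dvg_eq {V : EuclideanSpace ℝ (Fin n) → EuclideanSpace ℝ (Fin n)}
    {V' : EuclideanSpace ℝ (Fin n) →L[ℝ] EuclideanSpace ℝ (Fin n)}
    {x : EuclideanSpace ℝ (Fin n)} (h : HasFDerivAt V V' x) :
    dvg V x = ∑ i, V' (EuclideanSpace.single i 1) i := by
  simp only [dvg]; rw [h.fderiv]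

lemma dvg_smul {c : EuclideanSpace ℝ (Fin n) → ℝ} {c' : EuclideanSpace ℝ (Fin n) →L[ℝ] ℝ}
    {V : EuclideanSpace ℝ (Fin n) → EuclideanSpace ℝ (Fin n)}
    {V' : EuclideanSpace ℝ (Fin n) →L[ℝ] EuclideanSpace ℝ (Fin n)}
    {x : EuclideanSpace ℝ (Fin n)}
    (hc : HasFDerivAt c c' x) (hV : HasFDerivAt V V' x) :
    dvg (fun y => c y • V y) x = c' (V x) + c x * dvg V x := by
  rw [dvg_eq (V := fun y => c y • V y) (hc.smul hV), dvg_eq hV, Finset.mul_sum, ← trace_smulRight c' (V x),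
    ← Finset.sum_add_distrib]
  apply Finset.sum_congr rfl
  intro i _
  simp only [ContinuousLinearMap.add_apply, PiLp.add_apply, ContinuousLinearMap.coe_smul',
    Pi.smul_apply, PiLp.smul_apply, smul_eq_mul, ContinuousLinearMap.smulRight_apply]
  ring

lemma aux4 {Ω : Set (EuclideanSpace ℝ (Fin n))} (hΩ : IsOpen Ω)
    {f : EuclideanSpace ℝ (Fin n) → ℝ} (hf : ContDiffOn ℝ (⊤ : ℕ∞) f Ω)
    {x : EuclideanSpace ℝ (Fin n)} (hx : x ∈ Ω) :
    dvg (fun y => f y • grad f y) x = ‖grad f x‖ ^ 2 + f x * lap f x := by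
  have hfd : HasFDerivAt f (fderiv ℝ f x) x := (diffAt_of_contDiffOn hΩ hf hx).hasFDerivAt
  have hgd : HasFDerivAt (grad f) (fderiv ℝ (grad f) x) x :=
    (diffAt_of_contDiffOn hΩ (contDiffOn_grad hΩ hf) hx).hasFDerivAt
  rw [dvg_smul hfd hgd, ← inner_grad, real_inner_self_eq_norm_sq]
  have : dvg (grad f) x = lap f x := rfl
  rw [this, add_comm]

lemma aux3 {Ω : Set (EuclideanSpace ℝ (Fin n))} (hΩ : IsOpen Ω)
    {φ f : EuclideanSpace ℝ (Fin n) → ℝ} (hφ : ContDiffOn ℝ (⊤ : ℕ∞) φ Ω)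
    (hφpos : ∀ x ∈ Ω, 0 < φ x) {lam : ℝ}
    (heig : ∀ x ∈ Ω, -(lap φ x) = lam * φ x)
    (hf : ContDiffOn ℝ (⊤ : ℕ∞) f Ω) {x : EuclideanSpace ℝ (Fin n)} (hx : x ∈ Ω) :
    ‖grad f x - (f x / φ x) • grad φ x‖ ^ 2 +
      dvg (fun y => (f y ^ 2 / φ y) • grad φ y) x
    = ‖grad f x‖ ^ 2 - lam * (f x) ^ 2 := by
  have hfx := diffAt_of_contDiffOn hΩ hf hx
  have hφx := diffAt_of_contDiffOn hΩ hφ hx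
  have hφne : φ x ≠ 0 := (hφpos x hx).ne'
  have hf2 : DifferentiableAt ℝ (fun y => f y ^ 2) x := hfx.pow 2
  have hc : DifferentiableAt ℝ (fun y => f y ^ 2 / φ y) x := by
    have h := hf2.mul (hφx.inv hφne)
    have hee : (fun y => f y ^ 2 / φ y) = fun y => f y ^ 2 * (φ y)⁻¹ := by
      ext y; rw [div_eq_mul_inv]
    rw [hee]; exact h
  have hgφ : HasFDerivAt (grad φ) (fderiv ℝ (grad φ) x) x :=
    (diffAt_of_contDiffOn hΩ (contDiffOn_grad hΩ hφ) hx).hasFDerivAt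
  have hD := dvg_smul hc.hasFDerivAt hgφ
  set c' := fderiv ℝ (fun y => f y ^ 2 / φ y) x with hc'
  set v := grad φ x with hv
  -- compute fderiv of f^2 in two ways
  have hEq : (fun y => f y ^ 2) =ᶠ[nhds x] (fun y => (f y ^ 2 / φ y) * φ y) := by
    filter_upwards [hΩ.mem_nhds hx] with y hy
    rw [div_mul_cancel₀ _ (hφpos y hy).ne']
  have h1 : fderiv ℝ (fun y => f y ^ 2) x =
      (f x ^ 2 / φ x) • fderiv ℝ φ x + φ x • c' := by
    rw [hEq.fderiv_eq]
    exact (hc.hasFDerivAt.mul hφx.hasFDerivAt).fderiv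
  have h2 : fderiv ℝ (fun y => f y ^ 2) x = (2 * f x) • fderiv ℝ f x := by
    have hmm : (fun y => f y ^ 2) = fun y => f y * f y := by ext y; ring
    rw [hmm, (show HasFDerivAt (fun y => f y * f y) _ x from hfx.hasFDerivAt.mul hfx.hasFDerivAt).fderiv]
    ext z
    simp only [ContinuousLinearMap.add_apply, ContinuousLinearMap.coe_smul', Pi.smul_apply,
      smul_eq_mul]
    ring
  -- value of c' at v
  have hval : φ x * c' v = 2 * f x * ⟪grad f x, v⟫ - (f x ^ 2 / φ x) * ‖v‖ ^ 2 := by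
    have := congrArg (fun (L : EuclideanSpace ℝ (Fin n) →L[ℝ] ℝ) => L v) (h1.symm.trans h2)
    simp only [ContinuousLinearMap.add_apply, ContinuousLinearMap.coe_smul', Pi.smul_apply,
      smul_eq_mul] at this
    rw [inner_grad, hv, ← real_inner_self_eq_norm_sq, inner_grad]
    linarith
  have hlap : dvg (grad φ) x = -(lam * φ x) := by
    have h := heig x hx
    rw [show lap φ x = dvg (grad φ) x from rfl] at h
    linarith
  rw [hD, hlap, norm_sub_sq_real, real_inner_smul_right, norm_smul]
  rw [show ⟪grad f x, v⟫ = fderiv ℝ f x v from inner_grad f x v] at hval ⊢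
  have hsq : (‖f x / φ x‖ * ‖v‖) ^ 2 = (f x / φ x) ^ 2 * ‖v‖ ^ 2 := by
    rw [mul_pow, Real.norm_eq_abs, sq_abs]
  rw [hsq]
  have hcv : c' v = (2 * f x * fderiv ℝ f x v - (f x ^ 2 / φ x) * ‖v‖ ^ 2) / φ x := by
    field_simp at hval ⊢
    linarith
  rw [hcv]
  field_simp
  ring

lemma key {Ω : Set (EuclideanSpace ℝ (Fin n))} (hΩ : IsOpen Ω)
    {φ : EuclideanSpace ℝ (Fin n) → ℝ} (hφ : ContDiffOn ℝ (⊤ : ℕ∞) φ Ω)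
    (hφpos : ∀ x ∈ Ω, 0 < φ x) {lam : ℝ}
    (heig : ∀ x ∈ Ω, -(lap φ x) = lam * φ x) :
    ∀ (m : ℕ) (u : EuclideanSpace ℝ (Fin n) → ℝ), ContDiffOn ℝ (⊤ : ℕ∞) u Ω → ∀ x ∈ Ω,
      ‖grad (lap^[m] u) x‖ ^ 2 - lam ^ (2 * m + 1) * (u x) ^ 2 =
        ‖grad (lap^[m] u) x - (lap^[m] u x / φ x) • grad φ x‖ ^ 2 +
        (∑ j ∈ Finset.range m, lam ^ (2 * (m - j) - 1) *
          ((lap^[j + 1] u x + lam * lap^[j] u x) ^ 2 +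
            2 * lam * ‖grad (lap^[j] u) x - (lap^[j] u x / φ x) • grad φ x‖ ^ 2)) +
        2 * (∑ j ∈ Finset.range m, lam ^ (2 * (m - j)) *
          dvg (fun y => ((lap^[j] u y) ^ 2 / φ y) • grad φ y -
            lap^[j] u y • grad (lap^[j] u) y) x) +
        dvg (fun y => ((lap^[m] u y) ^ 2 / φ y) • grad φ y) x := by
  intro m
  induction m with
  | zero =>
    intro u hu x hx
    have h3 := aux3 hΩ hφ hφpos heig hu hx
    simp only [Function.iterate_zero, id_eq, Finset.range_zero, Finset.sum_empty,
      Nat.mul_zero, Nat.zero_add, pow_one, mul_zero, add_zero, zero_add] at h3 ⊢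
    linarith
  | succ m ih =>
    intro u hu x hx
    have hlapu : ContDiffOn ℝ (⊤ : ℕ∞) (lap u) Ω := contDiffOn_lap hΩ hu
    have hIH := ih (lap u) hlapu x hx
    have h3 := aux3 hΩ hφ hφpos heig hu hx
    have h4 := aux4 hΩ hu hx
    have hux := diffAt_of_contDiffOn hΩ hu hx
    have hφx := diffAt_of_contDiffOn hΩ hφ hx
    have hgu := diffAt_of_contDiffOn hΩ (contDiffOn_grad hΩ hu) hx
    have hgφ := diffAt_of_contDiffOn hΩ (contDiffOn_grad hΩ hφ) hx
    have hφne : φ x ≠ 0 := (hφpos x hx).ne'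
    have hc : DifferentiableAt ℝ (fun y => u y ^ 2 / φ y) x := by
      have h := ((hux.pow 2).mul (hφx.inv hφne))
      have hee : (fun y => u y ^ 2 / φ y) = fun y => u y ^ 2 * (φ y)⁻¹ := by
        ext y; rw [div_eq_mul_inv]
      rw [hee]; exact h
    have hA : DifferentiableAt ℝ (fun y => (u y ^ 2 / φ y) • grad φ y) x := hc.smul hgφ
    have hB : DifferentiableAt ℝ (fun y => u y • grad u y) x := hux.smul hgu
    have hsub := dvg_sub hA hB
    rw [Finset.sum_range_succ', Finset.sum_range_succ']
    have e1 : 2 * (m + 1 - 0) - 1 = 2 * m + 1 := by omega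
    have e2 : 2 * (m + 1 - 0) = 2 * m + 2 := by omega
    have e3 : 2 * (m + 1) + 1 = 2 * m + 3 := by omega
    rw [e1, e2, e3]
    simp only [Function.iterate_succ_apply, Function.iterate_zero, id_eq,
      Nat.add_sub_add_right] at hIH ⊢
    rw [hsub]
    linear_combination hIH - 2 * lam ^ (2 * m + 1) * lam * h3 + 2 * lam ^ (2 * m + 1) * lam * h4

theorem stmt3 {n : ℕ} (Ω : Set (EuclideanSpace ℝ (Fin n))) (hΩ : IsOpen Ω)
    (u φ : EuclideanSpace ℝ (Fin n) → ℝ)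
    (hu : ContDiffOn ℝ (⊤ : ℕ∞) u Ω) (hφ : ContDiffOn ℝ (⊤ : ℕ∞) φ Ω)
    (hφpos : ∀ x ∈ Ω, 0 < φ x) (lam : ℝ)
    (heig : ∀ x ∈ Ω, -(lap φ x) = lam * φ x)
    (m : ℕ) :
    ∀ x ∈ Ω,
      ‖grad (lap^[m] u) x‖ ^ 2 - lam ^ (2 * m + 1) * (u x) ^ 2 =
        ‖grad (lap^[m] u) x - (lap^[m] u x / φ x) • grad φ x‖ ^ 2 +
        (∑ j ∈ Finset.range m, lam ^ (2 * (m - j) - 1) *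
          ((lap^[j + 1] u x + lam * lap^[j] u x) ^ 2 +
            2 * lam * ‖grad (lap^[j] u) x - (lap^[j] u x / φ x) • grad φ x‖ ^ 2)) +
        2 * (∑ j ∈ Finset.range m, lam ^ (2 * (m - j)) *
          dvg (fun y => ((lap^[j] u y) ^ 2 / φ y) • grad φ y -
            lap^[j] u y • grad (lap^[j] u) y) x) +
        dvg (fun y => ((lap^[m] u y) ^ 2 / φ y) • grad φ y) x := by
  exact key hΩ hφ hφpos heig m u hu
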